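/- Let ρ > 0 and η > 0 be fixed. For γ > 0 and δ > 0 define the symmetric 2×2 matrix B(γ,δ) with entries B₁₁ = 2γ − δ, B₁₂ = B₂₁ = −(δ/2)(η + γ/2), B₂₂ = δρ/(1+ρ). Then there exist constants c > 0 and c̄ > 0, depending only on ρ and η, such that: (a) for every γ ∈ (0,1], the choice δ = cγ satisfies δ < min{1, 2γ/(1 + ((1+ρ)/(4ρ))(η + γ/2)²)} and Xᵀ B(γ, cγ) X ≥ c̄ γ |X|² for all X ∈ ℝ²; and (b) for every γ ≥ 1, the choice δ = c/γ satisfies δ < min{1, 2γ/(1 + ((1+ρ)/(4ρ))(η + γ/2)²)} and Xᵀ B(γ, c/γ) X ≥ (c̄/γ) |X|² for all X ∈ ℝ². -/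

import Mathlib

open Matrix

noncomputable section

/-- Auxiliary: lower bound for a 2×2 quadratic form via a discriminant condition. -/
lemma quad_aux (a b d e x y : ℝ) (hae : e < a) (hb : b ^ 2 ≤ (a - e) * (d - e)) :
    e * (x * x + y * y) ≤ a * x * x + 2 * b * (x * y) + d * y * y := by
  nlinarith [sq_nonneg ((a - e) * x + b * y), mul_nonneg (sub_nonneg.2 hb) (sq_nonneg y),
    sq_nonneg y, sq_nonneg x]

/-- The symmetric 2×2 matrix arising in the hypocoercive L² analysis of Langevin dynamics. -/
def Bmat (ρ η γ δ : ℝ) : Matrix (Fin 2) (Fin 2) ℝ :=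
  !![2 * γ - δ, -(δ / 2) * (η + γ / 2); -(δ / 2) * (η + γ / 2), δ * ρ / (1 + ρ)]

set_option maxHeartbeats 1600000 in
theorem stmt3 (ρ η : ℝ) (hρ : 0 < ρ) (hη : 0 < η) :
    ∃ c > (0 : ℝ), ∃ cbar > (0 : ℝ),
      (∀ γ : ℝ, 0 < γ → γ ≤ 1 →
        c * γ < min 1 (2 * γ / (1 + ((1 + ρ) / (4 * ρ)) * (η + γ / 2) ^ 2)) ∧
        ∀ X : Fin 2 → ℝ, cbar * γ * (X ⬝ᵥ X) ≤ X ⬝ᵥ (Bmat ρ η γ (c * γ)).mulVec X) ∧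
      (∀ γ : ℝ, 1 ≤ γ →
        c / γ < min 1 (2 * γ / (1 + ((1 + ρ) / (4 * ρ)) * (η + γ / 2) ^ 2)) ∧
        ∀ X : Fin 2 → ℝ, cbar / γ * (X ⬝ᵥ X) ≤ X ⬝ᵥ (Bmat ρ η γ (c / γ)).mulVec X) := by
  have h1ρ : (0 : ℝ) < 1 + ρ := by linarith
  obtain ⟨M, hMdef⟩ : ∃ M : ℝ, M = η + 1 / 2 := ⟨_, rfl⟩
  have hMpos : 0 < M := by rw [hMdef]; positivity
  have hden : 0 < 2 * ρ + M ^ 2 * (1 + ρ) := by positivity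
  obtain ⟨c, hcdef⟩ : ∃ c : ℝ, c = ρ / (2 * ρ + M ^ 2 * (1 + ρ)) := ⟨_, rfl⟩
  have hcpos : 0 < c := by rw [hcdef]; positivity
  have hckey : 2 * c * ρ + c * M ^ 2 * (1 + ρ) = ρ := by
    rw [hcdef]; field_simp
  have hchalf : c < 1 / 2 := by
    rw [hcdef, div_lt_iff₀ hden]
    nlinarith [mul_pos (mul_pos hMpos hMpos) h1ρ]
  obtain ⟨cbar, hcbdef⟩ : ∃ cb : ℝ, cb = c * ρ / (2 * (1 + ρ)) := ⟨_, rfl⟩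
  have hcbpos : 0 < cbar := by rw [hcbdef]; positivity
  have hcbkey : 2 * cbar * (1 + ρ) = c * ρ := by
    rw [hcbdef]; field_simp
  have hcbsmall : cbar < 1 / 4 := by
    rw [hcbdef, div_lt_iff₀ (by linarith : (0:ℝ) < 2 * (1 + ρ))]
    nlinarith
  -- the key algebraic identity: c² M² = 2 cbar (1 - 2c)
  have l4 : c ^ 2 * M ^ 2 = 2 * cbar * (1 - 2 * c) := by
    have h5 : c ^ 2 * M ^ 2 * (1 + ρ) = 2 * cbar * (1 - 2 * c) * (1 + ρ) := by
      nlinarith [hckey, hcbkey]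
    have := mul_right_cancel₀ (by linarith : (1:ℝ) + ρ ≠ 0) h5
    linarith [this]
  refine ⟨c, hcpos, cbar, hcbpos, ?_, ?_⟩
  · intro γ hγ hγ1
    have hA : 0 < 1 + (1 + ρ) / (4 * ρ) * (η + γ / 2) ^ 2 := by positivity
    have hηγ : (η + γ / 2) ^ 2 ≤ M ^ 2 := by
      have h1 : η + γ / 2 ≤ M := by rw [hMdef]; linarith
      nlinarith [hη, hγ]
    constructor
    · rw [lt_min_iff]
      refine ⟨by nlinarith, ?_⟩
      rw [lt_div_iff₀ hA]
      have hcA : c * ((1 + ρ) / (4 * ρ) * (η + γ / 2) ^ 2) ≤ 1 / 4 := by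
        have e : c * ((1 + ρ) / (4 * ρ) * (η + γ / 2) ^ 2)
            = c * (1 + ρ) * (η + γ / 2) ^ 2 / (4 * ρ) := by ring
        rw [e, div_le_iff₀ (by positivity : (0:ℝ) < 4 * ρ)]
        nlinarith [mul_le_mul_of_nonneg_left hηγ
          (by positivity : (0:ℝ) ≤ c * (1 + ρ)), hckey]
      nlinarith [mul_le_mul_of_nonneg_left hcA hγ.le,
        mul_lt_mul_of_pos_left hchalf hγ]
    · intro X
      have hexp : X ⬝ᵥ (Bmat ρ η γ (c * γ)).mulVec X =
          (2 * γ - c * γ) * X 0 * X 0 + 2 * (-(c * γ / 2) * (η + γ / 2)) * (X 0 * X 1)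
            + (c * γ * ρ / (1 + ρ)) * X 1 * X 1 := by
        simp [Bmat, mulVec, dotProduct, Fin.sum_univ_two]
        ring
      have hdot : X ⬝ᵥ X = X 0 * X 0 + X 1 * X 1 := by
        simp [dotProduct, Fin.sum_univ_two]
      rw [hexp, hdot]
      apply quad_aux
      · nlinarith
      · have hd : c * γ * ρ / (1 + ρ) = 2 * cbar * γ := by
          rw [div_eq_iff (by positivity : (1:ℝ) + ρ ≠ 0)]
          nlinarith [hcbkey]
        rw [hd]
        have key : c ^ 2 * (η + γ / 2) ^ 2 ≤ 4 * cbar * (2 - c - cbar) := by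
          have l1 : c ^ 2 * (η + γ / 2) ^ 2 ≤ c ^ 2 * M ^ 2 :=
            mul_le_mul_of_nonneg_left hηγ (by positivity)
          nlinarith
        nlinarith [mul_le_mul_of_nonneg_left key (mul_pos hγ hγ).le]
  · intro γ hγ1
    have hγ : 0 < γ := by linarith
    have hγ2 : 1 ≤ γ ^ 2 := by nlinarith
    have hA : 0 < 1 + (1 + ρ) / (4 * ρ) * (η + γ / 2) ^ 2 := by positivity
    have hηγ : (η + γ / 2) ^ 2 ≤ M ^ 2 * γ ^ 2 := by
      have h1 : η + γ / 2 ≤ M * γ := by rw [hMdef]; nlinarith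
      nlinarith [hη, hγ]
    constructor
    · rw [lt_min_iff]
      refine ⟨by rw [div_lt_one hγ]; nlinarith, ?_⟩
      rw [div_lt_div_iff₀ hγ hA]
      have hcA : c * ((1 + ρ) / (4 * ρ) * (η + γ / 2) ^ 2) ≤ γ ^ 2 / 4 := by
        have e : c * ((1 + ρ) / (4 * ρ) * (η + γ / 2) ^ 2)
            = c * (1 + ρ) * (η + γ / 2) ^ 2 / (4 * ρ) := by ring
        rw [e, div_le_div_iff₀ (by positivity : (0:ℝ) < 4 * ρ) (by norm_num : (0:ℝ) < 4)]
        have h7 : c * (1 + ρ) * (M ^ 2 * γ ^ 2) = (ρ - 2 * c * ρ) * γ ^ 2 := by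
          linear_combination γ ^ 2 * hckey
        nlinarith [mul_le_mul_of_nonneg_left hηγ
          (by positivity : (0:ℝ) ≤ c * (1 + ρ)), h7,
          mul_nonneg (mul_nonneg hcpos.le hρ.le) (sq_nonneg γ)]
      nlinarith [hcA, hγ2, hchalf, hcpos]
    · intro X
      have hexp : X ⬝ᵥ (Bmat ρ η γ (c / γ)).mulVec X =
          (2 * γ - c / γ) * X 0 * X 0 + 2 * (-(c / γ / 2) * (η + γ / 2)) * (X 0 * X 1)
            + (c / γ * ρ / (1 + ρ)) * X 1 * X 1 := by
        simp [Bmat, mulVec, dotProduct, Fin.sum_univ_two]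
        ring
      have hdot : X ⬝ᵥ X = X 0 * X 0 + X 1 * X 1 := by
        simp [dotProduct, Fin.sum_univ_two]
      rw [hexp, hdot]
      have hγne : γ ≠ 0 := ne_of_gt hγ
      apply quad_aux
      · have hcg : c / γ * γ = c := div_mul_cancel₀ c hγne
        rw [div_lt_iff₀ hγ]
        nlinarith [hcg, hγ2, hchalf, hcbsmall]
      · have hd : c / γ * ρ / (1 + ρ) = 2 * cbar / γ := by
          field_simp
          nlinarith [hcbkey]
        rw [hd]
        have key : c ^ 2 * (η + γ / 2) ^ 2 ≤ 4 * cbar * (2 * γ ^ 2 - c - cbar) := by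
          have l1 : c ^ 2 * (η + γ / 2) ^ 2 ≤ c ^ 2 * (M ^ 2 * γ ^ 2) :=
            mul_le_mul_of_nonneg_left hηγ (by positivity)
          nlinarith [mul_le_mul_of_nonneg_left hγ2 (mul_pos hcbpos hcpos).le]
        have e1 : (-(c / γ / 2) * (η + γ / 2)) ^ 2 =
            c ^ 2 * (η + γ / 2) ^ 2 / 4 / γ ^ 2 := by
          field_simp; ring
        have e2 : (2 * γ - c / γ - cbar / γ) * (2 * cbar / γ - cbar / γ) =
            cbar * (2 * γ ^ 2 - c - cbar) / γ ^ 2 := by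
          field_simp; ring
        rw [e1, e2]
        apply div_le_div_of_nonneg_right _ (by positivity)
        linarith
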